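/- arXiv:1410.4150 — 5 statements merged into one kernel-verified Lean document; each statement's English description precedes it below -/
import Mathlib

section
/- Multivariate integration by parts (Theorem A.1 of the paper). Let μ and ν be finite signed Borel measures on the box [a,b] ⊂ ℝ^d and set f = f_μ and g = f_ν. Then ∫_{(a,b]} f dν = Σ_{(I₁,I₂,I₃)} (−1)^{|I₁|+|I₂|} ∫_{(a_{I₁}, b_{I₁}]} g(x_{I₁}−; a_{I₂} : b_{I₃}) dμ_{I₁, a_{I₂}:b_{I₃}}(x_{I₁}), where the sum runs over all ordered triples (I₁, I₂, I₃) of pairwise disjoint subsets of {1,…,d} with I₁ ∪ I₂ ∪ I₃ = {1,…,d}; here a_{I₂} : b_{I₃} denotes any point c ∈ [a,b] with c_j = a_j for j ∈ I₂ and c_j = b_j for j ∈ I₃ (only coordinates outside I₁ matter), (a_{I₁}, b_{I₁}] = ∏_{j∈I₁} (a_j, b_j], and for I₁ = ∅ the corresponding term is interpreted as (−1)^{|I₂|} f(a_{I₂} : b_{I₃}) · g(a_{I₂} : b_{I₃}). -/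
/-!
Expanding both signed measures into their Jordan parts, every integral in the statement becomes,
by Fubini, a signed combination of the masses of one set of pairs `(y, z)` under the four
products of Jordan parts. Both measures live on `[a, b]`, so it suffices to compare indicator
functions on `[a, b]²`. There the left-hand indicator `1[y ≤ z, a < z]` factors over the
coordinates, and for `a ≤ z` each factor equals `1 - 1[z_j < y_j] - 1[y_j ≤ a_j, z_j ≤ a_j]`;
multiplying out the product over `j` gives the signed sum over the triples `(I₁, I₂, I₃)`,
one of three choices per coordinate.
-/

open MeasureTheory Set

noncomputable def sInt {α : Type*} [MeasurableSpace α]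
    (lam : MeasureTheory.SignedMeasure α) (s : Set α) (h : α → ℝ) : ℝ :=
  (∫ x in s, h x ∂lam.toJordanDecomposition.posPart) -
    ∫ x in s, h x ∂lam.toJordanDecomposition.negPart

theorem prod_one_sub_sub_eq_sum_powerset {R ι : Type*} [CommRing R] [Fintype ι] [DecidableEq ι]
    (u v : ι → R) :
    ∏ j, (1 - u j - v j) =
      ∑ I₁ : Finset ι, ∑ I₂ ∈ I₁ᶜ.powerset,
        (-1 : R) ^ (I₁.card + I₂.card) * ((∏ j ∈ I₁, u j) * ∏ j ∈ I₂, v j) := by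
  have hsplit : ∀ j, 1 - u j - v j = -u j + (-v j + 1) := fun j => by ring
  simp_rw [hsplit]
  rw [Finset.prod_add, Finset.powerset_univ]
  refine Finset.sum_congr rfl fun I₁ _ => ?_
  rw [← Finset.compl_eq_univ_sdiff, Finset.prod_add, Finset.mul_sum]
  refine Finset.sum_congr rfl fun I₂ _ => ?_
  simp only [Finset.prod_neg, Finset.prod_const_one, mul_one, pow_add]
  ring

theorem ite_le_and_lt_eq_one_sub_sub {R : Type*} [Ring R] {a y z : ℝ} (hz : a ≤ z) :
    (if y ≤ z ∧ a < z then 1 else 0 : R) =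
      1 - (if z < y then 1 else 0) - (if y ≤ a ∧ z ≤ a then 1 else 0) := by
  by_cases hzy : z < y
  · have : ¬ (y ≤ a ∧ z ≤ a) := fun h => by linarith [h.1]
    simp [hzy, this, not_le.2 hzy]
  · by_cases hza : a < z
    · simp [hzy, hza, not_lt.1 hzy, not_le.2 hza]
    · simp [hzy, hza, (not_lt.1 hzy).trans (not_lt.1 hza), not_lt.1 hza]

section MeasureIdentity

variable {γ κ : Type*} [MeasurableSpace γ]

theorem measureReal_eq_sum_of_indicator_eq_on {ρ : Measure γ} [IsFiniteMeasure ρ] {K : Set γ}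
    (hK : ∀ᵐ p ∂ρ, p ∈ K) {A : Set γ} {B : κ → Set γ} {c : κ → ℝ} {F : Finset κ}
    (hA : MeasurableSet A) (hB : ∀ i ∈ F, MeasurableSet (B i))
    (h : ∀ p ∈ K, A.indicator 1 p = ∑ i ∈ F, c i * (B i).indicator 1 p) :
    ρ.real A = ∑ i ∈ F, c i * ρ.real (B i) := by
  calc ρ.real A = ∫ p, A.indicator 1 p ∂ρ := (integral_indicator_one hA).symm
    _ = ∫ p, ∑ i ∈ F, c i * (B i).indicator 1 p ∂ρ := integral_congr_ae (hK.mono h)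
    _ = ∑ i ∈ F, c i * ρ.real (B i) := by
      rw [integral_finsetSum _ fun i hi => ((integrable_const 1).indicator (hB i hi)).const_mul _]
      exact Finset.sum_congr rfl fun i hi => by
        rw [integral_const_mul, integral_indicator_one (hB i hi)]

end MeasureIdentity

namespace MeasureTheory

variable {α β : Type*} [MeasurableSpace α] [MeasurableSpace β]

theorem Measure.measureReal_prod_eq_integral (σ : Measure α) (ρ : Measure β) [IsFiniteMeasure σ]
    [IsFiniteMeasure ρ] {C : Set (α × β)} (hC : MeasurableSet C) :
    (σ.prod ρ).real C = ∫ x, ρ.real (Prod.mk x ⁻¹' C) ∂σ := by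
  rw [measureReal_def, Measure.prod_apply hC]
  exact (integral_toReal (measurable_measure_prodMk_left hC).aemeasurable
    (.of_forall fun _ => measure_lt_top ρ _)).symm

namespace SignedMeasure

theorem totalVariation_eq_zero_of_forall_subset {s : SignedMeasure α} {U : Set α}
    (hU : MeasurableSet U) (h : ∀ E, MeasurableSet E → E ⊆ U → s E = 0) :
    s.totalVariation U = 0 := by
  obtain ⟨i, hi, _, _, hpos, hneg⟩ := s.toJordanDecomposition_spec
  rw [totalVariation, Measure.add_apply, hpos, hneg, toMeasureOfZeroLE_apply _ _ _ hU,
    toMeasureOfLEZero_apply _ _ _ hU]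
  simp [h _ (hi.inter hU) inter_subset_right, h _ (hi.compl.inter hU) inter_subset_right]

noncomputable def jordanProdReal (σ : SignedMeasure α) (τ : SignedMeasure β)
    (C : Set (α × β)) : ℝ :=
  (σ.toJordanDecomposition.posPart.prod τ.toJordanDecomposition.posPart).real C
    - (σ.toJordanDecomposition.posPart.prod τ.toJordanDecomposition.negPart).real C
    - (σ.toJordanDecomposition.negPart.prod τ.toJordanDecomposition.posPart).real C
    + (σ.toJordanDecomposition.negPart.prod τ.toJordanDecomposition.negPart).real C

theorem sInt_apply_eq_jordanProdReal (σ : SignedMeasure α) (τ : SignedMeasure β) {S : Set α}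
    (hS : MeasurableSet S) {F : α → Set β} (hF : ∀ x, MeasurableSet (F x))
    (hC : MeasurableSet {p : α × β | p.1 ∈ S ∧ p.2 ∈ F p.1}) :
    sInt σ S (fun x => τ (F x)) = jordanProdReal σ τ {p | p.1 ∈ S ∧ p.2 ∈ F p.1} := by
  have key : ∀ (m : Measure α) [IsFiniteMeasure m], ∫ x in S, τ (F x) ∂m =
      (m.prod τ.toJordanDecomposition.posPart).real {p | p.1 ∈ S ∧ p.2 ∈ F p.1}
        - (m.prod τ.toJordanDecomposition.negPart).real {p | p.1 ∈ S ∧ p.2 ∈ F p.1} := by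
    intro m _
    rw [Measure.measureReal_prod_eq_integral _ _ hC, Measure.measureReal_prod_eq_integral _ _ hC,
      ← integral_sub (Measure.integrable_measure_prodMk_left hC (measure_ne_top _ _))
        (Measure.integrable_measure_prodMk_left hC (measure_ne_top _ _)),
      ← integral_indicator hS]
    congr 1 with x
    by_cases hx : x ∈ S
    · simp [hx, τ.apply_eq_posPart_real_sub_negPart_real (hF x)]
    · simp [hx]
  rw [sInt, key, key, jordanProdReal]
  ring

theorem jordanProdReal_swap (σ : SignedMeasure α) (τ : SignedMeasure β) {C : Set (β × α)}
    (hC : MeasurableSet C) :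
    jordanProdReal τ σ C = jordanProdReal σ τ (Prod.swap ⁻¹' C) := by
  simp only [jordanProdReal, ← Measure.prod_swap (μ := σ.toJordanDecomposition.posPart),
    ← Measure.prod_swap (μ := σ.toJordanDecomposition.negPart),
    map_measureReal_apply measurable_swap hC]
  ring

theorem jordanProdReal_eq_sum_of_indicator_eq_on {κ : Type*} {σ : SignedMeasure α}
    {τ : SignedMeasure β} {s : Set α} {t : Set β} (hs : MeasurableSet s) (ht : MeasurableSet t)
    (hσ : ∀ E, MeasurableSet E → E ⊆ sᶜ → σ E = 0) (hτ : ∀ E, MeasurableSet E → E ⊆ tᶜ → τ E = 0)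
    {A : Set (α × β)} {B : κ → Set (α × β)} {c : κ → ℝ} {F : Finset κ}
    (hA : MeasurableSet A) (hB : ∀ i ∈ F, MeasurableSet (B i))
    (h : ∀ p ∈ s ×ˢ t, A.indicator 1 p = ∑ i ∈ F, c i * (B i).indicator 1 p) :
    jordanProdReal σ τ A = ∑ i ∈ F, c i * jordanProdReal σ τ (B i) := by
  have hσ0 := totalVariation_eq_zero_of_forall_subset hs.compl hσ
  have hτ0 := totalVariation_eq_zero_of_forall_subset ht.compl hτ
  rw [totalVariation, Measure.add_apply, add_eq_zero] at hσ0 hτ0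
  have key : ∀ (X : Measure α) (Y : Measure β) [IsFiniteMeasure X] [IsFiniteMeasure Y],
      X sᶜ = 0 → Y tᶜ = 0 → (X.prod Y).real A = ∑ i ∈ F, c i * (X.prod Y).real (B i) :=
    fun X Y _ _ hX hY => measureReal_eq_sum_of_indicator_eq_on
      (mem_ae_iff.2 (Measure.measure_prod_compl_eq_zero hX hY)) hA hB h
  simp only [jordanProdReal, key _ _ hσ0.1 hτ0.1, key _ _ hσ0.1 hτ0.2, key _ _ hσ0.2 hτ0.1,
    key _ _ hσ0.2 hτ0.2, mul_sub, mul_add, ← Finset.sum_sub_distrib, ← Finset.sum_add_distrib]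

end SignedMeasure

end MeasureTheory

section Box

variable {ι : Type*} (a b : ι → ℝ)

def ibpLhsSet : Set ((ι → ℝ) × (ι → ℝ)) :=
  {p | (∀ j, p.2 j ∈ Ioc (a j) (b j)) ∧ p.1 ∈ Icc a p.2}

def ibpTermSet [DecidableEq ι] (I₁ I₂ : Finset ι) : Set ((ι → ℝ) × (ι → ℝ)) :=
  {p | ((∀ j ∈ I₁, p.1 j ∈ Ioc (a j) (b j)) ∧ ∀ j ∉ I₁, p.1 j ≤ if j ∈ I₂ then a j else b j) ∧
    (∀ j ∈ I₁, p.2 j < p.1 j) ∧ ∀ j ∉ I₁, p.2 j ≤ if j ∈ I₂ then a j else b j}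

theorem measurableSet_ibpLhsSet [Countable ι] : MeasurableSet (ibpLhsSet a b) := by
  unfold ibpLhsSet; measurability

theorem measurableSet_ibpTermSet [Countable ι] [DecidableEq ι] (I₁ I₂ : Finset ι) :
    MeasurableSet (ibpTermSet a b I₁ I₂) := by
  unfold ibpTermSet; measurability

variable {a b}

theorem indicator_ibpLhsSet [Fintype ι] {p : (ι → ℝ) × (ι → ℝ)} (hp : p ∈ Icc a b ×ˢ Icc a b) :
    (ibpLhsSet a b).indicator 1 p = ∏ j, (if p.1 j ≤ p.2 j ∧ a j < p.2 j then 1 else 0 : ℝ) := by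
  classical
  obtain ⟨⟨hya, -⟩, -, hzb⟩ := hp
  rw [Fintype.prod_boole, indicator_apply, Pi.one_apply]
  congr 1
  exact propext ⟨fun ⟨hz, _, hyz⟩ j => ⟨hyz j, (hz j).1⟩,
    fun h => ⟨fun j => ⟨(h j).2, hzb j⟩, hya, fun j => (h j).1⟩⟩

theorem indicator_ibpTermSet [DecidableEq ι] {I₁ I₂ : Finset ι} (hI : Disjoint I₁ I₂)
    {p : (ι → ℝ) × (ι → ℝ)} (hp : p ∈ Icc a b ×ˢ Icc a b) :
    (ibpTermSet a b I₁ I₂).indicator 1 p =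
      (∏ j ∈ I₁, if p.2 j < p.1 j then 1 else 0 : ℝ) *
        ∏ j ∈ I₂, if p.1 j ≤ a j ∧ p.2 j ≤ a j then 1 else 0 := by
  classical
  obtain ⟨⟨-, hyb⟩, hza, hzb⟩ := hp
  rw [Finset.prod_boole, Finset.prod_boole, ite_zero_mul_ite_zero, mul_one, indicator_apply,
    Pi.one_apply]
  congr 1
  refine propext ⟨fun ⟨⟨_, hy⟩, hzy, hz⟩ => ⟨hzy, fun j hj => ?_⟩, fun ⟨hzy, ha⟩ => ?_⟩
  · have hj₁ := Finset.disjoint_right.1 hI hj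
    simpa [hj] using And.intro (hy j hj₁) (hz j hj₁)
  · refine ⟨⟨fun j hj => ⟨(hza j).trans_lt (hzy j hj), hyb j⟩, fun j _ => ?_⟩, hzy, fun j _ => ?_⟩
    all_goals split_ifs with hj₂
    exacts [(ha j hj₂).1, hyb j, (ha j hj₂).2, hzb j]

theorem indicator_ibpLhsSet_eq_sum [Fintype ι] [DecidableEq ι] {p : (ι → ℝ) × (ι → ℝ)}
    (hp : p ∈ Icc a b ×ˢ Icc a b) :
    (ibpLhsSet a b).indicator 1 p = ∑ I₁ : Finset ι, ∑ I₂ ∈ I₁ᶜ.powerset,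
      (-1 : ℝ) ^ (I₁.card + I₂.card) * (ibpTermSet a b I₁ I₂).indicator 1 p := by
  rw [indicator_ibpLhsSet hp,
    Finset.prod_congr rfl fun j _ => ite_le_and_lt_eq_one_sub_sub (hp.2.1 j),
    prod_one_sub_sub_eq_sum_powerset]
  refine Finset.sum_congr rfl fun I₁ _ => Finset.sum_congr rfl fun I₂ hI₂ => ?_
  rw [indicator_ibpTermSet (Finset.subset_compl_iff_disjoint_left.1 (Finset.mem_powerset.1 hI₂)) hp]

end Box

/-- The triple `(I₁, I₂, I₃)` is encoded by `I₁` and `I₂ ⊆ I₁ᶜ`, with `I₃ = (I₁ ∪ I₂)ᶜ`. The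
integral against `μ_{I₁,c}` of a function of `x_{I₁}` is written as the integral against `μ` over
`{y : y_{I₁} ∈ (a_{I₁}, b_{I₁}], y_j ≤ c_j (j ∉ I₁)}`, and `g(x_{I₁}−; c)` as
`ν {z : z_j < x_j (j ∈ I₁), z_j ≤ c_j (j ∉ I₁)}`. -/
theorem ibp_multivariate_general (d : ℕ) (a b : Fin d → ℝ)
    (μ ν : MeasureTheory.SignedMeasure (Fin d → ℝ))
    (hμ : ∀ E : Set (Fin d → ℝ), MeasurableSet E → E ⊆ (Set.Icc a b)ᶜ → μ E = 0)
    (hν : ∀ E : Set (Fin d → ℝ), MeasurableSet E → E ⊆ (Set.Icc a b)ᶜ → ν E = 0) :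
    sInt ν {y | ∀ j, y j ∈ Set.Ioc (a j) (b j)} (fun x => μ (Set.Icc a x)) =
      ∑ I₁ : Finset (Fin d), ∑ I₂ ∈ I₁ᶜ.powerset,
        (-1 : ℝ) ^ (I₁.card + I₂.card) *
          sInt μ
            {y | (∀ j ∈ I₁, y j ∈ Set.Ioc (a j) (b j)) ∧
                 ∀ j ∉ I₁, y j ≤ if j ∈ I₂ then a j else b j}
            (fun y => ν {z | (∀ j ∈ I₁, z j < y j) ∧
                 ∀ j ∉ I₁, z j ≤ if j ∈ I₂ then a j else b j}) := by
  have hK : MeasurableSet (Icc a b) := measurableSet_Icc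
  have hexpand := SignedMeasure.jordanProdReal_eq_sum_of_indicator_eq_on hK hK hμ hν
    (measurableSet_ibpLhsSet a b) (F := Finset.univ.sigma fun I₁ => I₁ᶜ.powerset)
    (c := fun I => (-1 : ℝ) ^ (I.1.card + I.2.card)) (B := fun I => ibpTermSet a b I.1 I.2)
    (fun I _ => measurableSet_ibpTermSet a b I.1 I.2)
    (fun p hp => by rw [Finset.sum_sigma]; exact indicator_ibpLhsSet_eq_sum hp)
  rw [Finset.sum_sigma] at hexpand
  have hC := (measurableSet_ibpLhsSet a b).preimage measurable_swap
  -- `by exact` defers the measurability arguments until `rw` has fixed the sets by unification.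
  rw [SignedMeasure.sInt_apply_eq_jordanProdReal ν μ (by measurability)
      (fun _ => measurableSet_Icc) (by exact hC),
    SignedMeasure.jordanProdReal_swap μ ν (by exact hC)]
  refine hexpand.trans (Finset.sum_congr rfl fun I₁ _ => Finset.sum_congr rfl fun I₂ _ => ?_)
  rw [SignedMeasure.sInt_apply_eq_jordanProdReal μ ν (by measurability) (fun _ => by measurability)
    (by exact measurableSet_ibpTermSet a b I₁ I₂)]
  rfl

/-- Multivariate integration by parts (Theorem A.1):
`∫_(a,b] f_μ dν = Σ_{(I₁,I₂,I₃)} (−1)^{|I₁|+|I₂|} ∫ g(x_{I₁}−; a_{I₂}:b_{I₃}) dμ_{I₁,a_{I₂}:b_{I₃}}`,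
the sum over ordered triples of pairwise disjoint sets with union `{1,…,d}`, encoded by the
pairs `(I₁, I₂ ⊆ I₁ᶜ)` with `I₃ = (I₁ ∪ I₂)ᶜ`.  The integral against the projection measure
`μ_{I₁,c}` of a function of `x_{I₁}` is expressed as the integral over
`{y : y_{I₁} ∈ (a_{I₁},b_{I₁}], y_j ≤ c_j (j ∉ I₁)}` against `μ` itself, and the partial left
limit `g(x_{I₁}−; c)` is `ν {z : z_j < x_j (j ∈ I₁), z_j ≤ c_j (j ∉ I₁)}`. -/
theorem ibp_multivariate (d : ℕ) (hd : 1 ≤ d) (a b : Fin d → ℝ) (hab : ∀ j, a j < b j)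
    (μ ν : MeasureTheory.SignedMeasure (Fin d → ℝ))
    (hμ : ∀ E : Set (Fin d → ℝ), MeasurableSet E → E ⊆ (Set.Icc a b)ᶜ → μ E = 0)
    (hν : ∀ E : Set (Fin d → ℝ), MeasurableSet E → E ⊆ (Set.Icc a b)ᶜ → ν E = 0) :
    sInt ν {y | ∀ j, y j ∈ Set.Ioc (a j) (b j)} (fun x => μ (Set.Icc a x)) =
      ∑ I₁ : Finset (Fin d), ∑ I₂ ∈ I₁ᶜ.powerset,
        (-1 : ℝ) ^ (I₁.card + I₂.card) *
          sInt μ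
            {y | (∀ j ∈ I₁, y j ∈ Set.Ioc (a j) (b j)) ∧
                 ∀ j ∉ I₁, y j ≤ if j ∈ I₂ then a j else b j}
            (fun y => ν {z | (∀ j ∈ I₁, z j < y j) ∧
                 ∀ j ∉ I₁, z j ≤ if j ∈ I₂ then a j else b j}) :=
  ibp_multivariate_general d a b μ ν hμ hν
end

section
/- Integration by parts for functions vanishing on the lower boundary (Proposition 3 of the paper). Let μ and ν be finite signed Borel measures on [0,1]^d (take a = (0,…,0) and b = 1 = (1,…,1)), and assume that ν(E) = 0 for every Borel set E ⊆ [0,1]^d \ (0,1]^d (equivalently, f_ν(u) = 0 whenever u_j = 0 for some j). Set f = f_μ and g = f_ν. Then ∫_{(0,1]^d} f dν = Σ_{I ⊆ {1,…,d}} (−1)^{|I|} ∫_{(0_I, 1_I]} g(x_I−; 1_{−I}) dμ_{I,1}(x_I), where (0_I, 1_I] = ∏_{j∈I} (0,1], μ_{I,1} is the projection measure of μ at c = 1 = (1,…,1), and the term for I = ∅ is interpreted as f(1,…,1) · g(1,…,1). -/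
open MeasureTheory Set

/-! Split `μ` and `ν` into their Jordan parts; by bilinearity it suffices to treat finite
measures `P` (carried by `[0,1]^d`) and `Q` (carried by `(0,1]^d`). By Tonelli both sides become
`P ⊗ Q`-masses of sets of pairs `(y, z)`: the left side is the mass of `{y ≤ z}`, the `I`-th term on
the right the mass of `{z_j < y_j for j ∈ I}` (up to null sets, using the supports). On
`[0,1]^d × (0,1]^d` the indicator `1[y ≤ z] = ∏_j (1 - 1[z_j < y_j])` expands into exactly this
alternating sum. -/

theorem Set.indicator_iInter_compl_eq_sum {Ω ι : Type*} [Fintype ι] (A : ι → Set Ω) (x : Ω) :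
    (⋂ i, (A i)ᶜ).indicator (1 : Ω → ℝ) x =
      ∑ I : Finset ι, (-1) ^ I.card * (⋂ i ∈ I, A i).indicator 1 x := by
  classical
  have h := prod_indicator_apply Finset.univ (fun i => (A i)ᶜ) (fun _ => (1 : Ω → ℝ)) x
  simp only [Finset.mem_univ, iInter_true, Finset.prod_const_one, indicator_compl, Pi.sub_apply,
    Pi.one_apply] at h
  rw [← h, Finset.prod_sub, Finset.powerset_univ]
  refine Finset.sum_congr rfl fun I _ => ?_
  rw [Finset.prod_const_one, mul_one, prod_indicator_apply, Finset.prod_const_one]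

namespace MeasureTheory

theorem measureReal_iInter_compl_eq_sum {Ω ι : Type*} [MeasurableSpace Ω] [Fintype ι]
    (π : Measure Ω) [IsFiniteMeasure π] {A : ι → Set Ω} (hA : ∀ i, MeasurableSet (A i)) :
    π.real (⋂ i, (A i)ᶜ) = ∑ I : Finset ι, (-1) ^ I.card * π.real (⋂ i ∈ I, A i) := by
  have hI (I : Finset ι) : MeasurableSet (⋂ i ∈ I, A i) :=
    .biInter I.countable_toSet fun i _ => hA i
  have hint (I : Finset ι) : Integrable ((⋂ i ∈ I, A i).indicator (1 : Ω → ℝ)) π :=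
    (integrable_indicator_iff (hI I)).2 (integrableOn_const (measure_ne_top _ _))
  rw [← integral_indicator_one (MeasurableSet.iInter fun i => (hA i).compl)]
  simp_rw [indicator_iInter_compl_eq_sum]
  rw [integral_finsetSum _ fun I _ => (hint I).const_mul _]
  simp_rw [integral_const_mul, integral_indicator_one (hI _)]

theorem SignedMeasure.totalVariation_eq_zero_of_forall_subset_s2 {α : Type*} [MeasurableSpace α]
    (σ : SignedMeasure α) {T : Set α} (hT : MeasurableSet T)
    (h : ∀ E, MeasurableSet E → E ⊆ T → σ E = 0) : σ.totalVariation T = 0 := by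
  obtain ⟨i, hi, _, _, hposPart, hnegPart⟩ := σ.toJordanDecomposition_spec
  rw [SignedMeasure.totalVariation, Measure.add_apply, hposPart, hnegPart,
    SignedMeasure.toMeasureOfZeroLE_apply _ _ _ hT, SignedMeasure.toMeasureOfLEZero_apply _ _ _ hT]
  simp [h _ (hi.inter hT) inter_subset_right, h _ (hi.compl.inter hT) inter_subset_right]

section Sections
variable {α β : Type*} [MeasurableSpace α] [MeasurableSpace β] {μ : Measure α} {ν : Measure β}
  [IsFiniteMeasure μ] [IsFiniteMeasure ν]

theorem integral_measureReal_section_left {T : α → Set β}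
    (hT : MeasurableSet {p : α × β | p.2 ∈ T p.1}) :
    ∫ x, ν.real (T x) ∂μ = (μ.prod ν).real {p | p.2 ∈ T p.1} := by
  rw [← integral_indicator_one hT, integral_prod _
    ((integrable_indicator_iff hT).2 (integrableOn_const (measure_ne_top _ _)))]
  exact integral_congr_ae <| ae_of_all _ fun x =>
    (integral_indicator_one (measurable_prodMk_left hT)).symm

theorem integral_measureReal_section_right {T : β → Set α}
    (hT : MeasurableSet {p : α × β | p.1 ∈ T p.2}) :
    ∫ y, μ.real (T y) ∂ν = (μ.prod ν).real {p | p.1 ∈ T p.2} := by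
  rw [← integral_indicator_one hT, integral_prod_symm _
    ((integrable_indicator_iff hT).2 (integrableOn_const (measure_ne_top _ _)))]
  exact integral_congr_ae <| ae_of_all _ fun y =>
    (integral_indicator_one (measurable_prodMk_right hT)).symm

theorem setIntegral_measureReal_section_left {s : Set α} {T : α → Set β}
    (hT : MeasurableSet {p : α × β | p.2 ∈ T p.1}) :
    ∫ x in s, ν.real (T x) ∂μ = (μ.prod ν).real ({p | p.2 ∈ T p.1} ∩ s ×ˢ univ) := by
  rw [integral_measureReal_section_left hT, ← Measure.restrict_univ (μ := ν),
    Measure.prod_restrict, measureReal_restrict_apply hT, Measure.restrict_univ]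

theorem integrable_measureReal_section {T : α → Set β}
    (hT : MeasurableSet {p : α × β | p.2 ∈ T p.1}) :
    Integrable (fun x => ν.real (T x)) μ :=
  Measure.integrable_measure_prodMk_left hT (measure_ne_top _ _)

end Sections

end MeasureTheory

section Box
variable {ι : Type*}

variable (ι) in
def cubeIoc : Set (ι → ℝ) := {y | ∀ j, y j ∈ Ioc (0 : ℝ) 1}

/- `∫ y in projBox I, h y ∂μ` is the integral of `h` over `(0_I, 1_I]` against the projection
measure `μ_{I,1}`, and `ν (leftLimitBox I y)` is the partial left limit `f_ν(y_I−; 1_{−I})`. -/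
def projBox (I : Finset ι) : Set (ι → ℝ) :=
  {y | (∀ j ∈ I, y j ∈ Ioc (0 : ℝ) 1) ∧ ∀ j ∉ I, y j ≤ 1}

def leftLimitBox (I : Finset ι) (y : ι → ℝ) : Set (ι → ℝ) :=
  {z | (∀ j ∈ I, z j < y j) ∧ ∀ j ∉ I, z j ≤ 1}

variable [Fintype ι]

theorem measurableSet_cubeIoc : MeasurableSet (cubeIoc ι) := by
  unfold cubeIoc; measurability

theorem measurableSet_setOf_mem_Icc_zero :
    MeasurableSet {p : (ι → ℝ) × (ι → ℝ) | p.1 ∈ Icc 0 p.2} := by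
  measurability

theorem measurableSet_setOf_mem_leftLimitBox (I : Finset ι) :
    MeasurableSet {p : (ι → ℝ) × (ι → ℝ) | p.2 ∈ leftLimitBox I p.1} := by
  unfold leftLimitBox; measurability

theorem integral_measureReal_Icc_eq_sum {P Q : Measure (ι → ℝ)} [IsFiniteMeasure P]
    [IsFiniteMeasure Q] (hP : ∀ᵐ y ∂P, y ∈ Icc 0 1) (hQ : ∀ᵐ z ∂Q, z ∈ cubeIoc ι) :
    ∫ x in cubeIoc ι, P.real (Icc 0 x) ∂Q =
      ∑ I : Finset ι, (-1) ^ I.card * ∫ y in projBox I, Q.real (leftLimitBox I y) ∂P := by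
  set A : ι → Set ((ι → ℝ) × (ι → ℝ)) := fun j => {p | p.2 j < p.1 j}
  have hA (j : ι) : MeasurableSet (A j) := by measurability
  have hsupp : ∀ᵐ p ∂P.prod Q, p.1 ∈ Icc 0 1 ∧ p.2 ∈ cubeIoc ι :=
    (Measure.quasiMeasurePreserving_fst.ae hP).and (Measure.quasiMeasurePreserving_snd.ae hQ)
  have hIcc : {p : (ι → ℝ) × (ι → ℝ) | p.1 ∈ Icc 0 p.2} =ᵐ[P.prod Q] ⋂ j, (A j)ᶜ := by
    refine Filter.eventuallyEq_set.2 (hsupp.mono fun p ⟨⟨hy0, _⟩, _⟩ => ?_)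
    simp only [mem_ofPred_eq, mem_iInter, mem_compl_iff, A, not_lt]
    exact ⟨fun h => h.2, fun h => ⟨hy0, h⟩⟩
  have hbox (I : Finset ι) :
      ({p | p.2 ∈ leftLimitBox I p.1} ∩ projBox I ×ˢ univ : Set ((ι → ℝ) × (ι → ℝ)))
        =ᵐ[P.prod Q] ⋂ j ∈ I, A j := by
    refine Filter.eventuallyEq_set.2 (hsupp.mono fun p ⟨⟨_, hy1⟩, hz⟩ => ?_)
    simp only [mem_inter_iff, mem_ofPred_eq, leftLimitBox, projBox, mem_prod, mem_univ, and_true,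
      mem_iInter, A]
    refine ⟨fun h => h.1.1, fun h => ⟨⟨h, fun j _ => (hz j).2⟩, ?_⟩⟩
    exact ⟨fun j hj => ⟨(hz j).1.trans (h j hj), hy1 j⟩, fun j _ => hy1 j⟩
  rw [Measure.restrict_eq_self_of_ae_mem hQ,
    integral_measureReal_section_right measurableSet_setOf_mem_Icc_zero, measureReal_congr hIcc,
    measureReal_iInter_compl_eq_sum _ hA]
  simp_rw [setIntegral_measureReal_section_left (measurableSet_setOf_mem_leftLimitBox _),
    measureReal_congr (hbox _)]

end Box

theorem sInt_section_eq_jordanParts {α β : Type*} [MeasurableSpace α] [MeasurableSpace β]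
    (μ : SignedMeasure β) (ν : SignedMeasure α) (s : Set α) {T : α → Set β}
    (hT : MeasurableSet {p : α × β | p.2 ∈ T p.1}) :
    sInt ν s (fun x => μ (T x)) =
      (∫ x in s, μ.toJordanDecomposition.posPart.real (T x) ∂ν.toJordanDecomposition.posPart -
        ∫ x in s, μ.toJordanDecomposition.negPart.real (T x) ∂ν.toJordanDecomposition.posPart) -
      (∫ x in s, μ.toJordanDecomposition.posPart.real (T x) ∂ν.toJordanDecomposition.negPart -
        ∫ x in s, μ.toJordanDecomposition.negPart.real (T x) ∂ν.toJordanDecomposition.negPart) := by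
  have hμT (x : α) : μ (T x) = μ.toJordanDecomposition.posPart.real (T x) -
      μ.toJordanDecomposition.negPart.real (T x) :=
    μ.apply_eq_posPart_real_sub_negPart_real (measurable_prodMk_left hT)
  simp_rw [sInt, hμT]
  rw [integral_sub, integral_sub] <;> exact (integrable_measureReal_section hT).integrableOn

theorem sInt_measure_Icc_eq_sum {ι : Type*} [Fintype ι] (μ ν : SignedMeasure (ι → ℝ))
    (hμ : ∀ᵐ y ∂μ.totalVariation, y ∈ Icc 0 1) (hν : ∀ᵐ z ∂ν.totalVariation, z ∈ cubeIoc ι) :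
    sInt ν (cubeIoc ι) (fun x => μ (Icc 0 x)) =
      ∑ I : Finset ι, (-1) ^ I.card * sInt μ (projBox I) (fun y => ν (leftLimitBox I y)) := by
  have hμpos := ae_mono (Measure.le_add_right le_rfl) hμ
  have hμneg := ae_mono (Measure.le_add_left le_rfl) hμ
  have hνpos := ae_mono (Measure.le_add_right le_rfl) hν
  have hνneg := ae_mono (Measure.le_add_left le_rfl) hν
  rw [sInt_section_eq_jordanParts (T := (Icc 0 ·)) _ _ _
      (measurableSet_setOf_mem_Icc_zero.preimage measurable_swap),
    integral_measureReal_Icc_eq_sum hμpos hνpos, integral_measureReal_Icc_eq_sum hμneg hνpos,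
    integral_measureReal_Icc_eq_sum hμpos hνneg, integral_measureReal_Icc_eq_sum hμneg hνneg]
  simp_rw [sInt_section_eq_jordanParts _ _ _ (measurableSet_setOf_mem_leftLimitBox _), mul_sub,
    Finset.sum_sub_distrib]
  ring

theorem ibp_boundary_vanishing_general (d : ℕ)
    (μ ν : MeasureTheory.SignedMeasure (Fin d → ℝ))
    (hμ : ∀ E : Set (Fin d → ℝ), MeasurableSet E →
      E ⊆ (Set.Icc (0 : Fin d → ℝ) 1)ᶜ → μ E = 0)
    (hν : ∀ E : Set (Fin d → ℝ), MeasurableSet E →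
      E ⊆ (Set.Icc (0 : Fin d → ℝ) 1)ᶜ → ν E = 0)
    (hν0 : ∀ E : Set (Fin d → ℝ), MeasurableSet E →
      E ⊆ Set.Icc (0 : Fin d → ℝ) 1 \ {y | ∀ j, y j ∈ Set.Ioc (0:ℝ) 1} → ν E = 0) :
    sInt ν {y | ∀ j, y j ∈ Set.Ioc (0:ℝ) 1} (fun x => μ (Set.Icc (0 : Fin d → ℝ) x)) =
      ∑ I : Finset (Fin d),
        (-1 : ℝ) ^ I.card *
          sInt μ
            {y | (∀ j ∈ I, y j ∈ Set.Ioc (0:ℝ) 1) ∧ ∀ j ∉ I, y j ≤ 1}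
            (fun y => ν {z | (∀ j ∈ I, z j < y j) ∧ ∀ j ∉ I, z j ≤ 1}) := by
  have hμK := measure_eq_zero_iff_ae_notMem.1 <|
    μ.totalVariation_eq_zero_of_forall_subset_s2 measurableSet_Icc.compl hμ
  have hνK := measure_eq_zero_iff_ae_notMem.1 <|
    ν.totalVariation_eq_zero_of_forall_subset_s2 measurableSet_Icc.compl hν
  have hνS := measure_eq_zero_iff_ae_notMem.1 <|
    ν.totalVariation_eq_zero_of_forall_subset_s2 (measurableSet_Icc.diff measurableSet_cubeIoc) hν0
  refine sInt_measure_Icc_eq_sum μ ν (hμK.mono fun y hy => not_not.1 hy) ?_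
  filter_upwards [hνK, hνS] with z hzK hzS
  by_contra hz
  exact hzS ⟨not_not.1 hzK, hz⟩

/-- Integration by parts for functions vanishing on the lower boundary (Proposition 3):
if `ν` assigns no mass to `[0,1]^d \ (0,1]^d`, then
`∫_{(0,1]^d} f_μ dν = Σ_{I ⊆ {1,…,d}} (−1)^{|I|} ∫_{(0_I,1_I]} f_ν(x_I−; 1_{−I}) dμ_{I,1}(x_I)`.
The integral against the projection measure `μ_{I,1}` of a function of `x_I` is expressed as
the integral over `{y : y_I ∈ (0_I,1_I], y_j ≤ 1 (j ∉ I)}` against `μ` itself, and the partial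
left limit `f_ν(x_I−; 1_{−I})` is `ν {z : z_j < x_j (j ∈ I), z_j ≤ 1 (j ∉ I)}`.  The term for
`I = ∅` is the constant `f_ν(1,…,1)` integrated over `{y ≤ 1}`, i.e. `f_μ(1,…,1)·f_ν(1,…,1)`. -/
theorem ibp_boundary_vanishing (d : ℕ) (hd : 1 ≤ d)
    (μ ν : MeasureTheory.SignedMeasure (Fin d → ℝ))
    (hμ : ∀ E : Set (Fin d → ℝ), MeasurableSet E →
      E ⊆ (Set.Icc (0 : Fin d → ℝ) 1)ᶜ → μ E = 0)
    (hν : ∀ E : Set (Fin d → ℝ), MeasurableSet E →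
      E ⊆ (Set.Icc (0 : Fin d → ℝ) 1)ᶜ → ν E = 0)
    (hν0 : ∀ E : Set (Fin d → ℝ), MeasurableSet E →
      E ⊆ Set.Icc (0 : Fin d → ℝ) 1 \ {y | ∀ j, y j ∈ Set.Ioc (0:ℝ) 1} → ν E = 0) :
    sInt ν {y | ∀ j, y j ∈ Set.Ioc (0:ℝ) 1} (fun x => μ (Set.Icc (0 : Fin d → ℝ) x)) =
      ∑ I : Finset (Fin d),
        (-1 : ℝ) ^ I.card *
          sInt μ
            {y | (∀ j ∈ I, y j ∈ Set.Ioc (0:ℝ) 1) ∧ ∀ j ∉ I, y j ≤ 1}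
            (fun y => ν {z | (∀ j ∈ I, z j < y j) ∧ ∀ j ∉ I, z j ≤ 1}) :=
  ibp_boundary_vanishing_general d μ ν hμ hν hν0
end

section
/- One-dimensional integration by parts with jump correction. Let a < b be real numbers and let μ and ν be finite signed Borel measures on [a,b]; set f(x) = μ([a,x]) and g(x) = ν([a,x]) for x ∈ [a,b], so that f(x) − f(x−) = μ({x}) and g(x) − g(x−) = ν({x}) for x ∈ (a,b]. Then ∫_{(a,b]} f(x) dν(x) = − ∫_{(a,b]} g(x) dμ(x) + f(b)g(b) − f(a)g(a) + Σ_{x ∈ (a,b]} μ({x}) ν({x}), where the sum runs over the (at most countably many) points x ∈ (a,b] that are atoms of both μ and ν, and is absolutely convergent. In particular, the correction term Σ_x μ({x}) ν({x}) vanishes if f or g is continuous. -/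
open MeasureTheory Set

/-!
For finite measures `σ, ρ`, Fubini computes the `σ ⊗ ρ`-measures of the two triangles
`{y ≤ x}` and `{x ≤ y}` in `(a,b]²` as `∫ ρ(a,x] dσ(x)` and `∫ σ(a,y] dρ(y)`. The triangles cover
the square and meet in the diagonal, whose measure is `∑ σ{x} ρ{x}`. Passing from `(a,x]` to
`[a,x]` only brings in the atoms at `a`, and signed measures follow by bilinearity from their
Jordan decompositions. An atom of `μ` at `x` is the jump of `y ↦ μ [a,y]` at `x`, so it vanishes
where this function is continuous.
-/

open Filter Topology
open scoped ENNReal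

theorem MeasureTheory.Measure.prod_setOf_mem_mem {α β : Type*} [MeasurableSpace α]
    [MeasurableSpace β] (σ : Measure α) (ρ : Measure β) [SFinite ρ] {s : Set α}
    {t : α → Set β} (hs : MeasurableSet s)
    (hst : MeasurableSet {p : α × β | p.1 ∈ s ∧ p.2 ∈ t p.1}) :
    σ.prod ρ {p | p.1 ∈ s ∧ p.2 ∈ t p.1} = ∫⁻ x in s, ρ (t x) ∂σ := by
  rw [Measure.prod_apply hst, ← lintegral_indicator hs]
  congr 1 with x
  by_cases hx : x ∈ s <;> simp [hx]

theorem setLIntegral_measure_singleton {α : Type*} [MeasurableSpace α]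
    [MeasurableSingletonClass α] (σ ρ : Measure α) [SFinite ρ] (s : Set α) :
    ∫⁻ x in s, ρ {x} ∂σ = ∑' x : s, ρ {(x : α)} * σ {(x : α)} := by
  set D := {x | 0 < ρ {x}}
  have hD : D.Countable := Measure.countable_meas_level_set_pos measurable_id
  have hsupp : (fun x => ρ {x}).support ⊆ D := fun x hx => pos_iff_ne_zero.2 hx
  calc ∫⁻ x in s, ρ {x} ∂σ = ∫⁻ x in D ∩ s, ρ {x} ∂σ := by
        rw [← Measure.restrict_restrict hD.measurableSet,
          setLIntegral_eq_of_support_subset hsupp]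
    _ = ∑' x : ↥(D ∩ s), ρ {(x : α)} * σ {(x : α)} :=
        lintegral_countable _ (hD.mono inter_subset_left)
    _ = ∑' x : s, ρ {(x : α)} * σ {(x : α)} := by
        rw [inter_comm, tsum_subtype (s ∩ D) (fun x => ρ {x} * σ {x}),
          tsum_subtype s (fun x => ρ {x} * σ {x}), ← indicator_indicator,
          indicator_eq_self.2 ((Function.support_mul_subset_left _ _).trans hsupp)]

section Order

variable {α : Type*} [TopologicalSpace α] [LinearOrder α] [OrderTopology α]
  [MeasurableSpace α] [BorelSpace α]

theorem measure_Icc_eq_measure_singleton_add_measure_Ioc (τ : Measure α) {a x : α}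
    (hax : a ≤ x) :
    τ (Icc a x) = τ {a} + τ (Ioc a x) := by
  rw [← Ioc_insert_left hax, insert_eq,
    measure_union (disjoint_singleton_left.2 left_notMem_Ioc) measurableSet_Ioc]

theorem measurable_measure_Icc (τ : Measure α) (a : α) : Measurable fun x => τ (Icc a x) :=
  Monotone.measurable fun _ _ hxy => measure_mono (Icc_subset_Icc_right hxy)

theorem integrable_measureReal_Icc (τ υ : Measure α) [IsFiniteMeasure τ] [IsFiniteMeasure υ]
    (a : α) : Integrable (fun x => τ.real (Icc a x)) υ :=
  .of_bound (measurable_measure_Icc τ a).ennreal_toReal.aestronglyMeasurable (τ.real univ)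
    (ae_of_all _ fun x => by
      simpa [abs_of_nonneg] using measureReal_mono (μ := τ) (subset_univ (Icc a x)))

variable [SecondCountableTopology α]

theorem lintegral_measure_inter_Iic_add_lintegral_measure_inter_Iic (σ ρ : Measure α)
    [SFinite σ] [SFinite ρ] {s : Set α} (hs : MeasurableSet s) :
    ∫⁻ x in s, ρ (s ∩ Iic x) ∂σ + ∫⁻ x in s, σ (s ∩ Iic x) ∂ρ
      = σ s * ρ s + ∑' x : s, ρ {(x : α)} * σ {(x : α)} := by
  set L : Set (α × α) := {p | p.1 ∈ s ∧ p.2 ∈ s ∩ Iic p.1}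
  have hL : MeasurableSet L := by
    have : L = s ×ˢ s ∩ {p | p.2 ≤ p.1} := by ext; simp [L, and_assoc]
    rw [this]; exact (hs.prod hs).inter (measurableSet_le measurable_snd measurable_fst)
  have hΔ : MeasurableSet {p : α × α | p.1 ∈ s ∧ p.2 ∈ ({p.1} : Set α)} := by
    have : {p : α × α | p.1 ∈ s ∧ p.2 ∈ ({p.1} : Set α)} = s ×ˢ univ ∩ {p | p.2 = p.1} := by
      ext; simp
    rw [this]; exact (hs.prod .univ).inter (measurableSet_eq_fun measurable_snd measurable_fst)
  have hunion : L ∪ Prod.swap ⁻¹' L = s ×ˢ s := by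
    ext ⟨x, y⟩
    simp only [L, mem_union, mem_inter_iff, mem_Iic, preimage_ofPred_eq, Prod.fst_swap,
      Prod.snd_swap, mem_ofPred_eq, mem_prod]
    grind
  have hinter : L ∩ Prod.swap ⁻¹' L = {p | p.1 ∈ s ∧ p.2 ∈ ({p.1} : Set α)} := by
    ext ⟨x, y⟩
    simp only [L, mem_inter_iff, mem_Iic, preimage_ofPred_eq, Prod.fst_swap, Prod.snd_swap,
      mem_ofPred_eq, mem_singleton_iff]
    grind
  calc ∫⁻ x in s, ρ (s ∩ Iic x) ∂σ + ∫⁻ x in s, σ (s ∩ Iic x) ∂ρ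
      = σ.prod ρ L + σ.prod ρ (Prod.swap ⁻¹' L) := by
        rw [Measure.measurePreserving_swap.measure_preimage hL.nullMeasurableSet]
        exact congr_arg₂ (· + ·) (Measure.prod_setOf_mem_mem σ ρ hs hL).symm
          (Measure.prod_setOf_mem_mem ρ σ hs hL).symm
    _ = σ.prod ρ (L ∪ Prod.swap ⁻¹' L) + σ.prod ρ (L ∩ Prod.swap ⁻¹' L) :=
        (measure_union_add_inter L (hL.preimage measurable_swap)).symm
    _ = σ s * ρ s + ∑' x : s, ρ {(x : α)} * σ {(x : α)} := by
        rw [hunion, hinter, Measure.prod_prod, Measure.prod_setOf_mem_mem σ ρ hs hΔ,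
          setLIntegral_measure_singleton]

theorem lintegral_measure_Icc_add_lintegral_measure_Icc (σ ρ : Measure α)
    [SFinite σ] [SFinite ρ] {a b : α} (hab : a ≤ b) :
    ∫⁻ x in Ioc a b, ρ (Icc a x) ∂σ + ∫⁻ x in Ioc a b, σ (Icc a x) ∂ρ + σ {a} * ρ {a}
      = σ (Icc a b) * ρ (Icc a b) + ∑' x : Ioc a b, ρ {(x : α)} * σ {(x : α)} := by
  have hsplit (τ υ : Measure α) : ∫⁻ x in Ioc a b, τ (Icc a x) ∂υ
      = ∫⁻ x in Ioc a b, τ (Ioc a b ∩ Iic x) ∂υ + τ {a} * υ (Ioc a b) := by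
    rw [setLIntegral_congr_fun (g := fun x => τ (Ioc a b ∩ Iic x) + τ {a}) measurableSet_Ioc
        fun x hx => by
          dsimp only
          rw [measure_Icc_eq_measure_singleton_add_measure_Ioc τ hx.1.le, Ioc_inter_Iic,
            inf_eq_right.2 hx.2, add_comm],
      lintegral_add_right _ measurable_const, setLIntegral_const]
  rw [hsplit, hsplit, add_add_add_comm,
    lintegral_measure_inter_Iic_add_lintegral_measure_inter_Iic σ ρ measurableSet_Ioc,
    measure_Icc_eq_measure_singleton_add_measure_Ioc σ hab,
    measure_Icc_eq_measure_singleton_add_measure_Ioc ρ hab]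
  ring

theorem hasSum_measureReal_singleton_mul (σ ρ : Measure α) [IsFiniteMeasure σ]
    [IsFiniteMeasure ρ] {a b : α} (hab : a ≤ b) :
    HasSum (fun x : Ioc a b => ρ.real {(x : α)} * σ.real {(x : α)})
      (∫ x in Ioc a b, ρ.real (Icc a x) ∂σ + ∫ x in Ioc a b, σ.real (Icc a x) ∂ρ
        + σ.real {a} * ρ.real {a} - σ.real (Icc a b) * ρ.real (Icc a b)) := by
  have hfin (τ υ : Measure α) [IsFiniteMeasure τ] [IsFiniteMeasure υ] :
      ∫⁻ x in Ioc a b, τ (Icc a x) ∂υ ≠ ∞ :=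
    ne_top_of_le_ne_top (by simp [ENNReal.mul_eq_top])
      (lintegral_mono fun x => measure_mono (subset_univ (Icc a x)))
  have htoReal (τ υ : Measure α) [IsFiniteMeasure τ] :
      ∫ x in Ioc a b, τ.real (Icc a x) ∂υ = (∫⁻ x in Ioc a b, τ (Icc a x) ∂υ).toReal :=
    integral_toReal (measurable_measure_Icc τ a).aemeasurable
      (ae_of_all _ fun _ => measure_lt_top _ _)
  have key := lintegral_measure_Icc_add_lintegral_measure_Icc σ ρ hab
  have hsum : ∑' x : Ioc a b, ρ {(x : α)} * σ {(x : α)} ≠ ∞ :=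
    ne_top_of_le_ne_top (by simp [hfin, ENNReal.mul_eq_top, measure_ne_top])
      (le_add_self.trans_eq key.symm)
  have hreal := congrArg ENNReal.toReal key
  rw [ENNReal.toReal_add (ENNReal.add_ne_top.2 ⟨hfin ρ σ, hfin σ ρ⟩) (by finiteness),
    ENNReal.toReal_add (hfin ρ σ) (hfin σ ρ), ENNReal.toReal_add (by finiteness) hsum,
    ENNReal.tsum_toReal_eq (fun x => by finiteness)] at hreal
  convert ENNReal.hasSum_toReal hsum using 1
  · funext x; simp [measureReal_def]
  · rw [htoReal, htoReal]
    simp only [measureReal_def, ENNReal.toReal_mul] at hreal ⊢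
    linarith

theorem hasSum_signedMeasure_singleton_mul (μ ν : SignedMeasure α) {a b : α} (hab : a ≤ b) :
    HasSum (fun x : Ioc a b => μ {(x : α)} * ν {(x : α)})
      (sInt ν (Ioc a b) (fun x => μ (Icc a x)) + sInt μ (Ioc a b) (fun x => ν (Icc a x))
        + ν {a} * μ {a} - ν (Icc a b) * μ (Icc a b)) := by
  have key (ρ σ : Measure α) [IsFiniteMeasure ρ] [IsFiniteMeasure σ] :=
    hasSum_measureReal_singleton_mul σ ρ hab
  have hint (τ υ : Measure α) [IsFiniteMeasure τ] [IsFiniteMeasure υ] :=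
    (integrable_measureReal_Icc τ υ a).restrict (s := Ioc a b)
  have h := ((key μ.toJordanDecomposition.posPart ν.toJordanDecomposition.posPart).sub
    (key μ.toJordanDecomposition.posPart ν.toJordanDecomposition.negPart)).sub
    ((key μ.toJordanDecomposition.negPart ν.toJordanDecomposition.posPart).sub
    (key μ.toJordanDecomposition.negPart ν.toJordanDecomposition.negPart))
  simp only [sInt, μ.apply_eq_posPart_real_sub_negPart_real measurableSet_Icc,
    ν.apply_eq_posPart_real_sub_negPart_real measurableSet_Icc,
    μ.apply_eq_posPart_real_sub_negPart_real (measurableSet_singleton _),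
    ν.apply_eq_posPart_real_sub_negPart_real (measurableSet_singleton _),
    integral_sub (hint _ _) (hint _ _)]
  refine (congrArg (HasSum _) ?_).mp (h.congr_fun fun x => by ring)
  ring

theorem MeasureTheory.SignedMeasure.apply_singleton_eq_zero_of_continuousWithinAt
    [DenselyOrdered α] (μ : SignedMeasure α) {a x : α} (hax : a < x)
    (hc : ContinuousWithinAt (fun y => μ (Icc a y)) (Ioo a x) x) :
    μ {x} = 0 := by
  obtain ⟨u, hu_mono, hu_mem, hu_lim⟩ := exists_seq_strictMono_tendsto' hax
  have hunion : ⋃ n, Icc a (u n) = Ico a x := by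
    ext y
    simp only [mem_iUnion, mem_Icc, mem_Ico]
    constructor
    · rintro ⟨n, hay, hyu⟩
      exact ⟨hay, hyu.trans_lt (hu_mem n).2⟩
    · rintro ⟨hay, hyx⟩
      obtain ⟨n, hn⟩ := (hu_lim.eventually (eventually_gt_nhds hyx)).exists
      exact ⟨n, hay, hn.le⟩
  have hIco : Tendsto (fun n => μ (Icc a (u n))) atTop (𝓝 (μ (Ico a x))) :=
    hunion ▸ VectorMeasure.tendsto_vectorMeasure_iUnion_atTop_nat
      (fun _ _ hmn => Icc_subset_Icc_right (hu_mono.monotone hmn)) fun _ => measurableSet_Icc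
  have hIcc : Tendsto (fun n => μ (Icc a (u n))) atTop (𝓝 (μ (Icc a x))) :=
    hc.tendsto.comp (tendsto_nhdsWithin_iff.2 ⟨hu_lim, .of_forall hu_mem⟩)
  have h := tendsto_nhds_unique hIcc hIco
  rw [← Ico_union_right hax.le, VectorMeasure.of_union (disjoint_singleton_right.2 right_notMem_Ico)
    measurableSet_Ico (measurableSet_singleton x)] at h
  linarith

end Order

theorem ibp_one_dim_jump_general (a b : ℝ) (hab : a < b)
    (μ ν : MeasureTheory.SignedMeasure ℝ) :
    Summable (fun x : Set.Ioc a b => (μ {(x : ℝ)} : ℝ) * ν {(x : ℝ)}) ∧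
    (sInt ν (Set.Ioc a b) (fun x => μ (Set.Icc a x)) =
      - sInt μ (Set.Ioc a b) (fun x => ν (Set.Icc a x)) +
        μ (Set.Icc a b) * ν (Set.Icc a b) - μ (Set.Icc a a) * ν (Set.Icc a a) +
        ∑' x : Set.Ioc a b, (μ {(x : ℝ)} : ℝ) * ν {(x : ℝ)}) ∧
    ((ContinuousOn (fun x => (μ (Set.Icc a x) : ℝ)) (Set.Icc a b) ∨
      ContinuousOn (fun x => (ν (Set.Icc a x) : ℝ)) (Set.Icc a b)) →
      ∑' x : Set.Ioc a b, (μ {(x : ℝ)} : ℝ) * ν {(x : ℝ)} = 0) := by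
  have h := hasSum_signedMeasure_singleton_mul μ ν hab.le
  have hatom (τ : SignedMeasure ℝ) (hτ : ContinuousOn (fun x => τ (Icc a x)) (Icc a b))
      (x : Ioc a b) : τ {(x : ℝ)} = 0 :=
    τ.apply_singleton_eq_zero_of_continuousWithinAt x.2.1 ((hτ x ⟨x.2.1.le, x.2.2⟩).mono
      (Ioo_subset_Icc_self.trans (Icc_subset_Icc_right x.2.2)))
  refine ⟨h.summable, ?_, ?_⟩
  · rw [h.tsum_eq, Icc_self]
    ring
  · rintro (hμ | hν)
    · simp [hatom μ hμ]
    · simp [hatom ν hν]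

/-- One-dimensional integration by parts with jump correction: with `f(x) = μ([a,x])` and
`g(x) = ν([a,x])`, the sum `Σ_{x ∈ (a,b]} μ({x})ν({x})` is absolutely convergent and
`∫_(a,b] f dν = − ∫_(a,b] g dμ + f(b)g(b) − f(a)g(a) + Σ_{x ∈ (a,b]} μ({x})ν({x})`;
moreover the correction term vanishes if `f` or `g` is continuous. -/
theorem ibp_one_dim_jump (a b : ℝ) (hab : a < b)
    (μ ν : MeasureTheory.SignedMeasure ℝ)
    (hμ : ∀ E : Set ℝ, MeasurableSet E → E ⊆ (Set.Icc a b)ᶜ → μ E = 0)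
    (hν : ∀ E : Set ℝ, MeasurableSet E → E ⊆ (Set.Icc a b)ᶜ → ν E = 0) :
    Summable (fun x : Set.Ioc a b => (μ {(x : ℝ)} : ℝ) * ν {(x : ℝ)}) ∧
    (sInt ν (Set.Ioc a b) (fun x => μ (Set.Icc a x)) =
      - sInt μ (Set.Ioc a b) (fun x => ν (Set.Icc a x)) +
        μ (Set.Icc a b) * ν (Set.Icc a b) - μ (Set.Icc a a) * ν (Set.Icc a a) +
        ∑' x : Set.Ioc a b, (μ {(x : ℝ)} : ℝ) * ν {(x : ℝ)}) ∧
    ((ContinuousOn (fun x => (μ (Set.Icc a x) : ℝ)) (Set.Icc a b) ∨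
      ContinuousOn (fun x => (ν (Set.Icc a x) : ℝ)) (Set.Icc a b)) →
      ∑' x : Set.Ioc a b, (μ {(x : ℝ)} : ℝ) * ν {(x : ℝ)} = 0) :=
  ibp_one_dim_jump_general a b hab μ ν
end

section
/- Inclusion–exclusion identity for box measures (Owen's identity used in the proof of the integration by parts theorem). Let μ be a finite signed Borel measure on the box [a,b] ⊂ ℝ^d and define f(x) = μ([a,x]) for x ∈ [a,b]. Then for every x ∈ [a,b], f(x) = Σ_{I ⊆ {1,…,d}} (−1)^{|I|} μ({y ∈ [a,b] : y_j > x_j for all j ∈ I}), where the term for I = ∅ equals μ([a,b]). -/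
open MeasureTheory Set

lemma vm_finset_sum {α : Type*} [MeasurableSpace α] (μ : MeasureTheory.SignedMeasure α)
    {ι : Type*} (t : Finset ι) (f : ι → Set α)
    (hm : ∀ i ∈ t, MeasurableSet (f i))
    (hd : ∀ i ∈ t, ∀ j ∈ t, i ≠ j → Disjoint (f i) (f j)) :
    μ (⋃ i ∈ t, f i) = ∑ i ∈ t, μ (f i) := by
  classical
  induction t using Finset.induction with
  | empty => simp
  | @insert c s hnot ih =>
    rw [Finset.set_biUnion_insert, VectorMeasure.of_union, Finset.sum_insert hnot,
      ih (fun i hi => hm i (Finset.mem_insert_of_mem hi))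
        (fun i hi j hj hij => hd i (Finset.mem_insert_of_mem hi) j (Finset.mem_insert_of_mem hj) hij)]
    · exact Set.disjoint_iUnion₂_right.mpr fun i hi =>
        hd c (Finset.mem_insert_self c s) i (Finset.mem_insert_of_mem hi)
          (by rintro rfl; exact hnot hi)
    · exact hm c (Finset.mem_insert_self c s)
    · exact MeasurableSet.biUnion s.countable_toSet
        fun i hi => hm i (Finset.mem_insert_of_mem hi)

/-- Inclusion–exclusion identity for box measures (Owen's identity): for a finite signed
Borel measure `μ` on `[a,b] ⊆ ℝ^d` and `x ∈ [a,b]`,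
`μ([a,x]) = Σ_{I ⊆ {1,…,d}} (−1)^{|I|} μ({y ∈ [a,b] : y_j > x_j for all j ∈ I})`. -/
theorem inclusion_exclusion_box (d : ℕ) (hd : 1 ≤ d) (a b : Fin d → ℝ)
    (hab : ∀ j, a j < b j)
    (μ : MeasureTheory.SignedMeasure (Fin d → ℝ))
    (hμ : ∀ E : Set (Fin d → ℝ), MeasurableSet E → E ⊆ (Set.Icc a b)ᶜ → μ E = 0)
    (x : Fin d → ℝ) (hx : x ∈ Set.Icc a b) :
    (μ (Set.Icc a x) : ℝ) =
      ∑ I : Finset (Fin d),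
        (-1 : ℝ) ^ I.card * μ {y | y ∈ Set.Icc a b ∧ ∀ j ∈ I, x j < y j} := by
  classical
  obtain ⟨hxa, hxb⟩ := hx
  -- atoms
  set C : Finset (Fin d) → Set (Fin d → ℝ) :=
    fun S => {y | y ∈ Set.Icc a b ∧ ∀ j, (j ∈ S ↔ x j < y j)} with hC
  have hCmeas : ∀ S, MeasurableSet (C S) := by
    intro S
    have : C S = Set.Icc a b ∩ ⋂ j, {y : Fin d → ℝ | j ∈ S ↔ x j < y j} := by
      ext y; simp [hC, Set.mem_iInter]
    rw [this]
    refine measurableSet_Icc.inter (MeasurableSet.iInter fun j => ?_)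
    by_cases hj : j ∈ S
    · have : {y : Fin d → ℝ | j ∈ S ↔ x j < y j} = {y | x j < y j} := by
        ext y; simp [hj]
      rw [this]; exact measurableSet_lt measurable_const (measurable_pi_apply j)
    · have : {y : Fin d → ℝ | j ∈ S ↔ x j < y j} = {y | x j < y j}ᶜ := by
        ext y; simp [hj]
      rw [this]
      exact (measurableSet_lt measurable_const (measurable_pi_apply j)).compl
  have hCdisj : ∀ S T : Finset (Fin d), S ≠ T → Disjoint (C S) (C T) := by
    intro S T hST
    rw [Set.disjoint_left]
    rintro y ⟨-, hyS⟩ ⟨-, hyT⟩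
    exact hST (Finset.ext fun j => (hyS j).trans (hyT j).symm)
  -- each set in the sum is a disjoint union of atoms
  have hA : ∀ I : Finset (Fin d),
      {y | y ∈ Set.Icc a b ∧ ∀ j ∈ I, x j < y j} =
        ⋃ S ∈ Finset.univ.filter (fun S => I ⊆ S), C S := by
    intro I
    ext y
    simp only [Set.mem_setOf_eq, Set.mem_iUnion, Finset.mem_filter, Finset.mem_univ, true_and]
    constructor
    · rintro ⟨hy, hI⟩
      refine ⟨Finset.univ.filter (fun j => x j < y j), fun j hj =>
        Finset.mem_filter.mpr ⟨Finset.mem_univ j, hI j hj⟩, hy, fun j => ?_⟩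
      simp [Finset.mem_filter]
    · rintro ⟨S, hIS, hy, hS⟩
      exact ⟨hy, fun j hj => (hS j).mp (hIS hj)⟩
  have hμA : ∀ I : Finset (Fin d),
      (μ {y | y ∈ Set.Icc a b ∧ ∀ j ∈ I, x j < y j} : ℝ) =
        ∑ S ∈ Finset.univ.filter (fun S => I ⊆ S), μ (C S) := by
    intro I
    rw [hA I]
    exact vm_finset_sum μ _ C (fun S _ => hCmeas S)
      (fun S _ T _ hST => hCdisj S T hST)
  -- left side is μ (C ∅)
  have hC0 : C ∅ = Set.Icc a x := by
    ext y
    simp only [hC, Set.mem_setOf_eq, Set.mem_Icc, Finset.notMem_empty, false_iff, not_lt]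
    constructor
    · rintro ⟨⟨hay, _⟩, h⟩
      exact ⟨hay, fun j => h j⟩
    · rintro ⟨hay, hyx⟩
      exact ⟨⟨hay, fun j => (hyx j).trans (hxb j)⟩, fun j => hyx j⟩
  calc (μ (Set.Icc a x) : ℝ) = μ (C ∅) := by rw [hC0]
    _ = ∑ S : Finset (Fin d), (if S = ∅ then (1 : ℝ) else 0) * μ (C S) := by
        symm
        simp only [ite_mul, one_mul, zero_mul]
        rw [Finset.sum_ite_eq' Finset.univ (∅ : Finset (Fin d)) (fun S => (μ (C S) : ℝ))]
        simp
    _ = ∑ S : Finset (Fin d), (∑ I ∈ S.powerset, (-1 : ℝ) ^ I.card) * μ (C S) := by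
        refine Finset.sum_congr rfl fun S _ => ?_
        congr 1
        have h := Finset.sum_powerset_neg_one_pow_card (x := S)
        have : ((∑ I ∈ S.powerset, (-1 : ℤ) ^ I.card : ℤ) : ℝ) = ∑ I ∈ S.powerset, (-1 : ℝ) ^ I.card := by
          push_cast; rfl
        rw [← this, h]
        split <;> simp
    _ = ∑ S : Finset (Fin d), ∑ I : Finset (Fin d),
          (if I ⊆ S then (-1 : ℝ) ^ I.card * μ (C S) else 0) := by
        refine Finset.sum_congr rfl fun S _ => ?_
        rw [Finset.sum_mul, ← Finset.sum_filter]
        refine (Finset.sum_congr ?_ fun I _ => rfl)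
        ext I; simp [Finset.mem_powerset]
    _ = ∑ I : Finset (Fin d), ∑ S : Finset (Fin d),
          (if I ⊆ S then (-1 : ℝ) ^ I.card * μ (C S) else 0) := Finset.sum_comm
    _ = ∑ I : Finset (Fin d),
        (-1 : ℝ) ^ I.card * μ {y | y ∈ Set.Icc a b ∧ ∀ j ∈ I, x j < y j} := by
        refine Finset.sum_congr rfl fun I _ => ?_
        rw [hμA I, Finset.mul_sum, Finset.sum_filter]
end

section
/- Marginalization identity for projection measures (the identity verified for step functions in the proof of the integration by parts theorem, equation (A.5) of the paper). Let μ be a finite signed Borel measure on the box [a,b] ⊂ ℝ^d, let K and L be disjoint subsets of {1,…,d}, let c ∈ [a,b], and let h be a bounded Borel function on ∏_{j∈K} [a_j,b_j]. Then ∫_{(a_{K∪L}, b_{K∪L}]} h(x_K) dμ_{K∪L, c}(x_{K∪L}) = Σ_{J ⊆ L} (−1)^{|J|} ∫_{(a_K, b_K]} h(x_K) dμ_{K, c(J)}(x_K), where (a_M, b_M] = ∏_{j∈M}(a_j,b_j], x_K denotes the coordinates of the integration variable indexed by K, and c(J) ∈ [a,b] is any vector whose j-th coordinate equals a_j for j ∈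 J, b_j for j ∈ L \ J, and c_j for j ∉ K ∪ L (the coordinates indexed by K are irrelevant). -/
open MeasureTheory Set

lemma chi_and (p q : Prop) [Decidable p] [Decidable q] [Decidable (p ∧ q)] :
    (if p ∧ q then (1:ℝ) else 0) = (if p then 1 else 0) * (if q then 1 else 0) := by
  by_cases hp : p <;> by_cases hq : q <;> simp [hp, hq]

lemma chi_forall {ι : Type*} (s : Finset ι) (p : ι → Prop) [DecidablePred p]
    [Decidable (∀ j ∈ s, p j)] :
    (if ∀ j ∈ s, p j then (1:ℝ) else 0) = ∏ j ∈ s, (if p j then 1 else 0) := by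
  by_cases h : ∀ j ∈ s, p j
  · rw [if_pos h]
    exact (Finset.prod_eq_one fun j hj => if_pos (h j hj)).symm
  · rw [if_neg h]
    push_neg at h
    obtain ⟨j, hj, hpj⟩ := h
    symm
    apply Finset.prod_eq_zero hj
    rw [if_neg hpj]

-- pointwise inclusion-exclusion identity for the indicators
lemma chi_sum (d : ℕ) (a b c : Fin d → ℝ) (hab : ∀ j, a j < b j)
    (K L : Finset (Fin d)) (hKL : Disjoint K L) (y : Fin d → ℝ) :
    (if ((∀ j ∈ K ∪ L, y j ∈ Set.Ioc (a j) (b j)) ∧ ∀ j ∉ K ∪ L, y j ≤ c j)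
      then (1:ℝ) else 0)
    = ∑ J ∈ L.powerset, (-1:ℝ)^J.card *
        (if ((∀ j ∈ K, y j ∈ Set.Ioc (a j) (b j)) ∧
             ∀ j ∉ K, y j ≤ if j ∈ J then a j else if j ∈ L then b j else c j)
         then (1:ℝ) else 0) := by
  classical
  set base : Prop := (∀ j ∈ K, y j ∈ Set.Ioc (a j) (b j)) ∧ (∀ j ∉ K ∪ L, y j ≤ c j) with hbase
  have hterm : ∀ J ∈ L.powerset,
      (-1:ℝ)^J.card *
        (if ((∀ j ∈ K, y j ∈ Set.Ioc (a j) (b j)) ∧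
             ∀ j ∉ K, y j ≤ if j ∈ J then a j else if j ∈ L then b j else c j)
         then (1:ℝ) else 0)
      = (if base then (1:ℝ) else 0) *
          ((∏ j ∈ J, -(if y j ≤ a j then (1:ℝ) else 0)) *
           ∏ j ∈ L \ J, (if y j ≤ b j then (1:ℝ) else 0)) := by
    intro J hJ
    rw [Finset.mem_powerset] at hJ
    have hiff : ((∀ j ∈ K, y j ∈ Set.Ioc (a j) (b j)) ∧
        ∀ j ∉ K, y j ≤ if j ∈ J then a j else if j ∈ L then b j else c j)
        ↔ base ∧ ((∀ j ∈ J, y j ≤ a j) ∧ ∀ j ∈ L \ J, y j ≤ b j) := by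
      constructor
      · rintro ⟨h1, h2⟩
        refine ⟨⟨h1, fun j hj => ?_⟩, fun j hj => ?_, fun j hj => ?_⟩
        · have hjK : j ∉ K := fun h => hj (Finset.mem_union_left _ h)
          have hjL : j ∉ L := fun h => hj (Finset.mem_union_right _ h)
          have hjJ : j ∉ J := fun h => hjL (hJ h)
          simpa [hjJ, hjL] using h2 j hjK
        · have hjL : j ∈ L := hJ hj
          have hjK : j ∉ K := fun h => (Finset.disjoint_left.1 hKL h) hjL
          simpa [hj] using h2 j hjK
        · rw [Finset.mem_sdiff] at hj
          have hjK : j ∉ K := fun h => (Finset.disjoint_left.1 hKL h) hj.1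
          simpa [hj.1, hj.2] using h2 j hjK
      · rintro ⟨⟨h1, h2⟩, h3, h4⟩
        refine ⟨h1, fun j hjK => ?_⟩
        by_cases hjL : j ∈ L
        · by_cases hjJ : j ∈ J
          · simpa [hjJ] using h3 j hjJ
          · simpa [hjJ, hjL] using h4 j (Finset.mem_sdiff.2 ⟨hjL, hjJ⟩)
        · have hjJ : j ∉ J := fun h => hjL (hJ h)
          have : j ∉ K ∪ L := by simp [hjK, hjL]
          simpa [hjJ, hjL] using h2 j this
    rw [if_congr hiff rfl rfl,
      chi_and base ((∀ j ∈ J, y j ≤ a j) ∧ ∀ j ∈ L \ J, y j ≤ b j),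
      chi_and (∀ j ∈ J, y j ≤ a j) (∀ j ∈ L \ J, y j ≤ b j),
      chi_forall J (fun j => y j ≤ a j), chi_forall (L \ J) (fun j => y j ≤ b j)]
    have hneg : (∏ j ∈ J, -(if y j ≤ a j then (1:ℝ) else 0))
        = (-1:ℝ)^J.card * ∏ j ∈ J, (if y j ≤ a j then (1:ℝ) else 0) := by
      calc (∏ j ∈ J, -(if y j ≤ a j then (1:ℝ) else 0))
          = ∏ j ∈ J, ((-1:ℝ) * (if y j ≤ a j then (1:ℝ) else 0)) := by
            exact Finset.prod_congr rfl fun j _ => (neg_one_mul _).symm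
        _ = (∏ _j ∈ J, (-1:ℝ)) * ∏ j ∈ J, (if y j ≤ a j then (1:ℝ) else 0) :=
            Finset.prod_mul_distrib
        _ = (-1:ℝ)^J.card * ∏ j ∈ J, (if y j ≤ a j then (1:ℝ) else 0) := by
            rw [Finset.prod_const]
    rw [hneg]; ring
  rw [Finset.sum_congr rfl hterm, ← Finset.mul_sum, ← Finset.prod_add]
  have hprod : (∏ j ∈ L, (-(if y j ≤ a j then (1:ℝ) else 0) + (if y j ≤ b j then (1:ℝ) else 0)))
      = ∏ j ∈ L, (if y j ∈ Set.Ioc (a j) (b j) then (1:ℝ) else 0) := by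
    refine Finset.prod_congr rfl fun j _ => ?_
    by_cases h1 : y j ≤ a j
    · have h2 : y j ≤ b j := h1.trans (hab j).le
      have h3 : ¬ (y j ∈ Set.Ioc (a j) (b j)) := by
        simp only [Set.mem_Ioc, not_and_or, not_lt]; left; exact h1
      simp [h1, h2, h3]
    · have h3 : (y j ∈ Set.Ioc (a j) (b j)) ↔ y j ≤ b j := by
        simp [Set.mem_Ioc, lt_of_not_ge h1]
      by_cases h2 : y j ≤ b j <;> simp [h1, h2, h3]
  rw [hprod]
  have hfinal : ((∀ j ∈ K ∪ L, y j ∈ Set.Ioc (a j) (b j)) ∧ ∀ j ∉ K ∪ L, y j ≤ c j)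
      ↔ base ∧ ∀ j ∈ L, y j ∈ Set.Ioc (a j) (b j) := by
    constructor
    · rintro ⟨h1, h2⟩
      exact ⟨⟨fun j hj => h1 j (Finset.mem_union_left _ hj), h2⟩,
        fun j hj => h1 j (Finset.mem_union_right _ hj)⟩
    · rintro ⟨⟨h1, h2⟩, h3⟩
      refine ⟨fun j hj => ?_, h2⟩
      rcases Finset.mem_union.1 hj with h | h
      · exact h1 j h
      · exact h3 j h
  rw [if_congr hfinal rfl rfl, chi_and base (∀ j ∈ L, y j ∈ Set.Ioc (a j) (b j)),
    chi_forall L (fun j => y j ∈ Set.Ioc (a j) (b j))]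

lemma measSet (d : ℕ) (a b g : Fin d → ℝ) (s : Finset (Fin d)) :
    MeasurableSet {y : Fin d → ℝ | (∀ j ∈ s, y j ∈ Set.Ioc (a j) (b j)) ∧ ∀ j ∉ s, y j ≤ g j} := by
  have h1 : {y : Fin d → ℝ | ∀ j ∈ s, y j ∈ Set.Ioc (a j) (b j)}
      = ⋂ j ∈ (s : Set (Fin d)), (fun y : Fin d → ℝ => y j) ⁻¹' Set.Ioc (a j) (b j) := by
    ext y; simp
  have h2 : {y : Fin d → ℝ | ∀ j ∉ s, y j ≤ g j}
      = ⋂ j ∈ ((s : Set (Fin d)))ᶜ, (fun y : Fin d → ℝ => y j) ⁻¹' Set.Iic (g j) := by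
    ext y; simp
  have hm1 : MeasurableSet {y : Fin d → ℝ | ∀ j ∈ s, y j ∈ Set.Ioc (a j) (b j)} := by
    rw [h1]
    exact MeasurableSet.biInter (Set.to_countable _)
      fun j _ => (measurable_pi_apply j) measurableSet_Ioc
  have hm2 : MeasurableSet {y : Fin d → ℝ | ∀ j ∉ s, y j ≤ g j} := by
    rw [h2]
    exact MeasurableSet.biInter (Set.to_countable _)
      fun j _ => (measurable_pi_apply j) measurableSet_Iic
  exact hm1.inter hm2

lemma core (d : ℕ) (a b c : Fin d → ℝ) (hab : ∀ j, a j < b j)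
    (K L : Finset (Fin d)) (hKL : Disjoint K L)
    (ν : Measure (Fin d → ℝ)) [IsFiniteMeasure ν]
    (f : (Fin d → ℝ) → ℝ) (hf : Measurable f) (M : ℝ) (hbd : ∀ y, |f y| ≤ M) :
    (∫ x in {y | (∀ j ∈ K ∪ L, y j ∈ Set.Ioc (a j) (b j)) ∧ ∀ j ∉ K ∪ L, y j ≤ c j}, f x ∂ν)
    = ∑ J ∈ L.powerset, (-1:ℝ)^J.card *
        ∫ x in {y | (∀ j ∈ K, y j ∈ Set.Ioc (a j) (b j)) ∧
            ∀ j ∉ K, y j ≤ if j ∈ J then a j else if j ∈ L then b j else c j}, f x ∂ν := by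
  classical
  have hfint : Integrable f ν :=
    Integrable.mono' (integrable_const M) hf.aestronglyMeasurable
      (ae_of_all _ fun y => by simpa [Real.norm_eq_abs] using hbd y)
  set S : Set (Fin d → ℝ) :=
    {y | (∀ j ∈ K ∪ L, y j ∈ Set.Ioc (a j) (b j)) ∧ ∀ j ∉ K ∪ L, y j ≤ c j} with hS
  set T : Finset (Fin d) → Set (Fin d → ℝ) := fun J =>
    {y | (∀ j ∈ K, y j ∈ Set.Ioc (a j) (b j)) ∧
        ∀ j ∉ K, y j ≤ if j ∈ J then a j else if j ∈ L then b j else c j} with hT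
  have hSm : MeasurableSet S := measSet d a b c (K ∪ L)
  have hTm : ∀ J, MeasurableSet (T J) := fun J =>
    measSet d a b (fun j => if j ∈ J then a j else if j ∈ L then b j else c j) K
  have step : ∀ J ∈ L.powerset,
      (-1:ℝ)^J.card * ∫ x in T J, f x ∂ν
      = ∫ x, (-1:ℝ)^J.card * Set.indicator (T J) f x ∂ν := by
    intro J _
    rw [← integral_indicator (hTm J)]
    exact (integral_const_mul _ _).symm
  rw [← integral_indicator hSm, Finset.sum_congr rfl step, ← integral_finset_sum]
  · refine integral_congr_ae (ae_of_all _ fun x => ?_)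
    have key := chi_sum d a b c hab K L hKL x
    have key2 := congrArg (fun r : ℝ => r * f x) key
    simp only [Finset.sum_mul, ite_mul, one_mul, zero_mul, mul_assoc] at key2
    calc Set.indicator S f x
        = (if ((∀ j ∈ K ∪ L, x j ∈ Set.Ioc (a j) (b j)) ∧ ∀ j ∉ K ∪ L, x j ≤ c j)
            then f x else 0) := by
          rw [Set.indicator_apply]
          simp only [hS, Set.mem_setOf_eq]
      _ = ∑ J ∈ L.powerset, (-1:ℝ)^J.card * Set.indicator (T J) f x := by
          rw [key2]
          refine Finset.sum_congr rfl fun J _ => ?_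
          rw [Set.indicator_apply]
          simp only [hT, Set.mem_setOf_eq]
  · intro J _
    exact ((hfint.indicator (hTm J)).const_mul _)

/-- Marginalization identity for projection measures (equation (A.5)): for disjoint `K, L`,
`c ∈ [a,b]` and a bounded Borel function `h` of the coordinates `x_K`,
`∫_{(a_{K∪L},b_{K∪L}]} h(x_K) dμ_{K∪L,c} = Σ_{J ⊆ L} (−1)^{|J|} ∫_{(a_K,b_K]} h(x_K) dμ_{K,c(J)}`,
where `c(J)` equals `a` on `J`, `b` on `L \ J` and `c` outside `K ∪ L`.  Each integral against
a projection measure `μ_{I,c'}` of a function of `x_I` is expressed as an integral against `μ`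
over `{y : y_I ∈ (a_I,b_I], y_j ≤ c'_j (j ∉ I)}`; the function `h` on `∏_{j∈K}[a_j,b_j]` is
encoded as `y ↦ H (y_K : c_{−K})` for a bounded measurable `H`. -/
theorem marginalization_projection (d : ℕ) (hd : 1 ≤ d) (a b : Fin d → ℝ)
    (hab : ∀ j, a j < b j)
    (μ : MeasureTheory.SignedMeasure (Fin d → ℝ))
    (hμ : ∀ E : Set (Fin d → ℝ), MeasurableSet E → E ⊆ (Set.Icc a b)ᶜ → μ E = 0)
    (K L : Finset (Fin d)) (hKL : Disjoint K L)
    (c : Fin d → ℝ) (hc : c ∈ Set.Icc a b)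
    (H : (Fin d → ℝ) → ℝ) (hHmeas : Measurable H) (M : ℝ) (hHbd : ∀ y, |H y| ≤ M) :
    sInt μ
        {y | (∀ j ∈ K ∪ L, y j ∈ Set.Ioc (a j) (b j)) ∧ ∀ j ∉ K ∪ L, y j ≤ c j}
        (fun y => H (fun j => if j ∈ K then y j else c j)) =
      ∑ J ∈ L.powerset,
        (-1 : ℝ) ^ J.card *
          sInt μ
            {y | (∀ j ∈ K, y j ∈ Set.Ioc (a j) (b j)) ∧
                 ∀ j ∉ K, y j ≤ if j ∈ J then a j else if j ∈ L then b j else c j}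
            (fun y => H (fun j => if j ∈ K then y j else c j)) := by
  classical
  set f : (Fin d → ℝ) → ℝ := fun y => H (fun j => if j ∈ K then y j else c j) with hf
  have hfmeas : Measurable f := by
    apply hHmeas.comp
    apply measurable_pi_lambda
    intro j
    by_cases hj : j ∈ K
    · simp only [hj, if_true]; exact measurable_pi_apply j
    · simp only [hj, if_false]; exact measurable_const
  have hfbd : ∀ y, |f y| ≤ M := fun y => hHbd _
  unfold sInt
  rw [core d a b c hab K L hKL _ f hfmeas M hfbd,
    core d a b c hab K L hKL _ f hfmeas M hfbd, ← Finset.sum_sub_distrib]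
  exact Finset.sum_congr rfl fun J _ => (mul_sub _ _ _).symm
end
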